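/- arXiv:1508.01978 — 2 statements merged into one kernel-verified Lean document; each statement's English description precedes it below -/
import Mathlib

section
/- The relative entropy of coherence of a density operator ρ on reference basis Ξ equals the minimum relative entropy from ρ to the set of states diagonal in Ξ, and this equals S(Λ^{Ξ}(ρ)) − S(ρ), where S denotes the von Neumann entropy. -/
open Matrix Kronecker BigOperators Finset
open scoped Classical ComplexOrder

noncomputable section

variable {m n q : Type*} [Fintype m] [DecidableEq m] [Fintype n] [DecidableEq n]
  [Fintype q] [DecidableEq q]

/-- the projector `|v⟩⟨v|` onto a vector `v`. -/
def proj (v : n → ℂ) : Matrix n n ℂ := vecMulVec v (star v)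

/-- an orthonormal basis of `ℂ^n`, given as a family of vectors. -/
def ONB (b : n → n → ℂ) : Prop := ∀ i j, star (b i) ⬝ᵥ b j = if i = j then (1 : ℂ) else 0

/-- the standard (computational) basis. -/
def stdB : n → n → ℂ := fun i j => if i = j then 1 else 0

/-- matrix logarithm of a Hermitian matrix, via the spectral decomposition
(with the convention `log 0 = 0`); junk value `0` on non-Hermitian matrices. -/
def mlog (A : Matrix n n ℂ) : Matrix n n ℂ :=
  if hA : A.IsHermitian then
    (hA.eigenvectorUnitary : Matrix n n ℂ) *
      diagonal (fun i => (Real.log (hA.eigenvalues i) : ℂ)) *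
      star (hA.eigenvectorUnitary : Matrix n n ℂ)
  else 0

/-- von Neumann entropy `S(ρ) = -Tr ρ log ρ` (in nats). -/
def vN (ρ : Matrix n n ℂ) : ℝ := -(ρ * mlog ρ).trace.re

/-- quantum relative entropy `S(ρ‖σ) = Tr(ρ log ρ - ρ log σ)`, which is `+∞`
unless the support of `ρ` is contained in the support of `σ`. -/
def relEnt (ρ σ : Matrix n n ℂ) : EReal :=
  if ∀ v, σ *ᵥ v = 0 → ρ *ᵥ v = 0
  then (((ρ * (mlog ρ - mlog σ)).trace.re : ℝ) : EReal)
  else ⊤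

/-- a density matrix. -/
def IsDensity (ρ : Matrix n n ℂ) : Prop := ρ.PosSemidef ∧ ρ.trace = 1

/-- the dephasing (pinching) channel in the basis `b`. -/
def dephase (b : n → n → ℂ) (ρ : Matrix n n ℂ) : Matrix n n ℂ :=
  ∑ i, proj (b i) * ρ * proj (b i)

/-- partial trace over the first factor. -/
def ptraceA (ρ : Matrix (m × n) (m × n) ℂ) : Matrix n n ℂ :=
  Matrix.of fun j j' => ∑ i, ρ (i, j) (i, j')

/-- partial trace over the second factor. -/
def ptraceB (ρ : Matrix (m × n) (m × n) ℂ) : Matrix m m ℂ :=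
  Matrix.of fun i i' => ∑ j, ρ (i, j) (i', j)

/-- the (unnormalized) steered state `⟨ξ|ρ|ξ⟩` on Bob's side, when Alice
obtains the outcome `ξ`. -/
def steer (ξ : m → ℂ) (ρ : Matrix (m × n) (m × n) ℂ) : Matrix n n ℂ :=
  Matrix.of fun j j' => ∑ i, ∑ i', star (ξ i) * ρ (i, j) (i', j') * ξ i'

/-- the probability `p^ξ = Tr[ρ (|ξ⟩⟨ξ| ⊗ I)]` of Alice's outcome `ξ`. -/
def sprob (ξ : m → ℂ) (ρ : Matrix (m × n) (m × n) ℂ) : ℝ := (steer ξ ρ).trace.re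

/-- the channel `I_A ⊗ Λ^{E_B}`: dephasing of the `B` factor in basis `b`. -/
def dephaseB (b : n → n → ℂ) (ρ : Matrix (m × n) (m × n) ℂ) : Matrix (m × n) (m × n) ℂ :=
  ∑ k, ((1 : Matrix m m ℂ) ⊗ₖ proj (b k)) * ρ * ((1 : Matrix m m ℂ) ⊗ₖ proj (b k))

/-- `b` is an orthonormal eigenbasis of `A`. -/
def IsEigenbasis (A : Matrix n n ℂ) (b : n → n → ℂ) : Prop :=
  ONB b ∧ ∀ k, ∃ μ : ℝ, A *ᵥ b k = (μ : ℂ) • b k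

/-- the `l₁`-norm of coherence of `τ` in the basis `b`. -/
def l1coh (b : n → n → ℂ) (τ : Matrix n n ℂ) : ℝ :=
  ∑ i, ∑ j, if i = j then 0 else ‖star (b i) ⬝ᵥ (τ *ᵥ b j)‖

/-- the trace norm `‖A‖₁ = Tr √(AᴴA)`. -/
def traceNorm (A : Matrix n n ℂ) : ℝ :=
  ∑ i, Real.sqrt ((Matrix.isHermitian_conjTranspose_mul_self A).eigenvalues i)

/-- the Fourier basis vectors `|ξ_k⟩ = d^{-1/2} Σ_j e^{-2πikj/d}|j⟩`. -/
def fbasis (d : ℕ) (k : Fin d) : Fin d → ℂ := fun j =>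
  (1 / Real.sqrt d) * Complex.exp (-(2 * Real.pi * Complex.I * (k : ℕ) * (j : ℕ)) / d)

/-!
An incoherent state is diagonal in `b`, `σ = ∑ qᵢ |bᵢ⟩⟨bᵢ|`, and then so is `log σ`, with
entries `log qᵢ`. Writing `pᵢ = ⟨bᵢ|ρ|bᵢ⟩` for the diagonal of `ρ` (which is also the spectrum
of `Λ(ρ)`), this gives `Tr ρ log σ = ∑ pᵢ log qᵢ` and hence
`S(ρ‖σ) = S(Λ(ρ)) - S(ρ) + ∑ pᵢ (log pᵢ - log qᵢ)`. The last sum is a classical relative entropy: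
it is nonnegative by Gibbs' inequality and vanishes at `σ = Λ(ρ)`.
-/

section Projections

variable {n : Type*} [Fintype n]

lemma proj_mulVec (v w : n → ℂ) : proj v *ᵥ w = (star v ⬝ᵥ w) • v := by
  rw [proj, vecMulVec_mulVec, op_smul_eq_smul]

lemma trace_mul_proj (M : Matrix n n ℂ) (v : n → ℂ) :
    (M * proj v).trace = star v ⬝ᵥ M *ᵥ v := by
  rw [proj, mul_vecMulVec, trace_vecMulVec, dotProduct_comm]

lemma proj_mul_mul_proj (M : Matrix n n ℂ) (v : n → ℂ) :
    proj v * M * proj v = (star v ⬝ᵥ M *ᵥ v) • proj v := by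
  rw [proj, vecMulVec_mul, vecMulVec_mul_vecMulVec, ← dotProduct_mulVec, vecMulVec_smul]

lemma dephase_eq_sum_smul_proj (b : n → n → ℂ) (ρ : Matrix n n ℂ) :
    dephase b ρ = ∑ i, (star (b i) ⬝ᵥ ρ *ᵥ b i) • proj (b i) := by
  simp only [dephase, proj_mul_mul_proj]

lemma isHermitian_sum_smul_proj (b : n → n → ℂ) (c : n → ℝ) :
    (∑ i, (c i : ℂ) • proj (b i)).IsHermitian :=
  isSelfAdjoint_sum _ fun i _ =>
    (posSemidef_vecMulVec_self_star (b i)).isHermitian.smul (Complex.conj_ofReal (c i))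

lemma posSemidef_sum_smul_proj (b : n → n → ℂ) {c : n → ℝ} (hc : ∀ i, 0 ≤ c i) :
    (∑ i, (c i : ℂ) • proj (b i)).PosSemidef :=
  posSemidef_sum _ fun i _ =>
    (posSemidef_vecMulVec_self_star (b i)).smul (Complex.zero_le_real.mpr (hc i))

def diagEntries (b : n → n → ℂ) (ρ : Matrix n n ℂ) (i : n) : ℝ := (star (b i) ⬝ᵥ ρ *ᵥ b i).re

lemma Matrix.IsHermitian.dephase_eq {ρ : Matrix n n ℂ} (hρ : ρ.IsHermitian) (b : n → n → ℂ) :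
    dephase b ρ = ∑ i, (diagEntries b ρ i : ℂ) • proj (b i) := by
  rw [dephase_eq_sum_smul_proj]
  refine Finset.sum_congr rfl fun i _ => congrArg (· • proj (b i)) ?_
  exact Complex.ext rfl (by simpa using hρ.im_star_dotProduct_mulVec_self (b i))

lemma Matrix.PosSemidef.diagEntries_nonneg {ρ : Matrix n n ℂ} (hρ : ρ.PosSemidef)
    (b : n → n → ℂ) (i : n) :
    0 ≤ diagEntries b ρ i :=
  hρ.re_dotProduct_nonneg (b i)

lemma Matrix.PosSemidef.mulVec_eq_zero_of_diagEntries_eq_zero {ρ : Matrix n n ℂ}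
    (hρ : ρ.PosSemidef) {b : n → n → ℂ} {i : n} (h : diagEntries b ρ i = 0) : ρ *ᵥ b i = 0 := by
  refine (hρ.dotProduct_mulVec_zero_iff (b i)).mp (Complex.ext h ?_)
  simpa using hρ.isHermitian.im_star_dotProduct_mulVec_self (b i)

lemma diagEntries_eq_zero_of_mulVec_eq_zero {ρ : Matrix n n ℂ} {b : n → n → ℂ} {i : n}
    (h : ρ *ᵥ b i = 0) : diagEntries b ρ i = 0 := by
  simp [diagEntries, h]

lemma re_trace_mul_sum_smul_proj (M : Matrix n n ℂ) (b : n → n → ℂ) (d : n → ℝ) :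
    (M * ∑ i, (d i : ℂ) • proj (b i)).trace.re = ∑ i, d i * diagEntries b M i := by
  rw [Finset.mul_sum, trace_sum, Complex.re_sum]
  refine Finset.sum_congr rfl fun i _ => ?_
  rw [Matrix.mul_smul, trace_smul, trace_mul_proj, smul_eq_mul, Complex.re_ofReal_mul]
  rfl

end Projections

section OrthonormalBasis

variable {n : Type*} [Fintype n] [DecidableEq n]

lemma Matrix.IsHermitian.cfc_mulVec_of_mulVec_eq_smul {𝕜 : Type*} [RCLike 𝕜] {A : Matrix n n 𝕜}
    (hA : A.IsHermitian) (f : ℝ → ℝ) {μ : ℝ} {v : n → 𝕜} (hv : A *ᵥ v = (μ : 𝕜) • v) :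
    hA.cfc f *ᵥ v = (f μ : 𝕜) • v := by
  set w := (star hA.eigenvectorUnitary : Matrix n n 𝕜) *ᵥ v
  have hUw : (hA.eigenvectorUnitary : Matrix n n 𝕜) *ᵥ w = v := by
    rw [mulVec_mulVec, Unitary.mul_star_self_of_mem hA.eigenvectorUnitary.2, one_mulVec]
  have hD : diagonal (RCLike.ofReal ∘ hA.eigenvalues) *ᵥ w = (μ : 𝕜) • w := by
    rw [← hA.conjStarAlgAut_star_eigenvectorUnitary, Unitary.conjStarAlgAut_star_apply,
      ← mulVec_mulVec, hUw, ← mulVec_mulVec, hv, mulVec_smul]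
  have hfD : diagonal (RCLike.ofReal ∘ f ∘ hA.eigenvalues) *ᵥ w = (f μ : 𝕜) • w := by
    ext k
    have hk := congrFun hD k
    simp only [mulVec_diagonal, Function.comp_apply, Pi.smul_apply, smul_eq_mul] at hk ⊢
    rcases mul_eq_mul_right_iff.mp hk with h | h
    · rw [RCLike.ofReal_inj.mp h]
    · simp [h]
  rw [IsHermitian.cfc, Unitary.conjStarAlgAut_apply, ← mulVec_mulVec, ← mulVec_mulVec, hfD,
    mulVec_smul, hUw]

variable {b : n → n → ℂ}

namespace ONB

lemma sum_proj (hb : ONB b) : ∑ i, proj (b i) = 1 := by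
  set U : Matrix n n ℂ := Matrix.of fun x i => b i x
  have hU : Uᴴ * U = 1 := by
    ext i j
    simpa [U, Matrix.mul_apply, dotProduct, Matrix.one_apply] using hb i j
  rw [← mul_eq_one_comm.mp hU]
  ext x y
  simp [U, Matrix.mul_apply, proj, Matrix.sum_apply, vecMulVec_apply]

lemma sum_smul_proj_mulVec (hb : ONB b) (c : n → ℂ) (j : n) :
    (∑ i, c i • proj (b i)) *ᵥ b j = c j • b j := by
  simp [sum_mulVec, smul_mulVec, proj_mulVec, hb _ j]

lemma diagEntries_sum_smul_proj (hb : ONB b) (c : n → ℝ) :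
    diagEntries b (∑ i, (c i : ℂ) • proj (b i)) = c := by
  ext j
  rw [diagEntries, hb.sum_smul_proj_mulVec, dotProduct_smul, hb j j, if_pos rfl]
  simp

lemma trace_sum_smul_proj (hb : ONB b) (c : n → ℂ) :
    (∑ i, c i • proj (b i)).trace = ∑ i, c i := by
  simp [trace_sum, proj, dotProduct_comm (b _), hb _ _]

lemma trace_dephase (hb : ONB b) (M : Matrix n n ℂ) : (dephase b M).trace = M.trace := by
  rw [dephase_eq_sum_smul_proj, hb.trace_sum_smul_proj]
  conv_rhs => rw [← M.mul_one, ← hb.sum_proj]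
  simp [Finset.mul_sum, trace_sum, trace_mul_proj]

lemma ext_mulVec (hb : ONB b) {M N : Matrix n n ℂ} (h : ∀ j, M *ᵥ b j = N *ᵥ b j) : M = N := by
  rw [← M.mul_one, ← N.mul_one, ← hb.sum_proj]
  simp only [Finset.mul_sum, proj, mul_vecMulVec, h]

lemma sum_diagEntries (hb : ONB b) (ρ : Matrix n n ℂ) : ∑ i, diagEntries b ρ i = ρ.trace.re := by
  simpa [hb.sum_proj] using (re_trace_mul_sum_smul_proj ρ b 1).symm

lemma dephase_sum_smul_proj (hb : ONB b) (c : n → ℝ) :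
    dephase b (∑ i, (c i : ℂ) • proj (b i)) = ∑ i, (c i : ℂ) • proj (b i) := by
  rw [(isHermitian_sum_smul_proj b c).dephase_eq, hb.diagEntries_sum_smul_proj]

lemma mlog_sum_smul_proj (hb : ONB b) (c : n → ℝ) :
    mlog (∑ i, (c i : ℂ) • proj (b i)) = ∑ i, (Real.log (c i) : ℂ) • proj (b i) := by
  have hA := isHermitian_sum_smul_proj b c
  rw [show mlog _ = hA.cfc Real.log from dif_pos hA]
  refine hb.ext_mulVec fun j => ?_
  rw [hb.sum_smul_proj_mulVec]
  exact hA.cfc_mulVec_of_mulVec_eq_smul Real.log (hb.sum_smul_proj_mulVec _ j)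

lemma vN_sum_smul_proj (hb : ONB b) (c : n → ℝ) :
    vN (∑ i, (c i : ℂ) • proj (b i)) = -∑ i, c i * Real.log (c i) := by
  rw [vN, hb.mlog_sum_smul_proj, re_trace_mul_sum_smul_proj, hb.diagEntries_sum_smul_proj]
  simp only [mul_comm]

lemma ker_sum_smul_proj_le_ker_iff (hb : ONB b) (c : n → ℂ) (ρ : Matrix n n ℂ) :
    (∀ v, (∑ i, c i • proj (b i)) *ᵥ v = 0 → ρ *ᵥ v = 0) ↔ ∀ i, c i = 0 → ρ *ᵥ b i = 0 := by
  refine ⟨fun h i hi => h _ (by simp [hb.sum_smul_proj_mulVec, hi]), fun h v hv => ?_⟩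
  have hcoord : ∀ i, c i * (star (b i) ⬝ᵥ v) = 0 := fun i => by
    simpa [sum_mulVec, smul_mulVec, proj_mulVec, smul_smul, dotProduct_sum, hb i] using
      congrArg (star (b i) ⬝ᵥ ·) hv
  rw [← one_mulVec v, ← hb.sum_proj, sum_mulVec, mulVec_sum]
  refine Finset.sum_eq_zero fun i _ => ?_
  rw [proj_mulVec, mulVec_smul]
  rcases mul_eq_zero.mp (hcoord i) with hc | hv
  · rw [h i hc, smul_zero]
  · rw [hv, zero_smul]

lemma relEnt_sum_smul_proj (hb : ONB b) (ρ : Matrix n n ℂ) (q : n → ℝ) :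
    relEnt ρ (∑ i, (q i : ℂ) • proj (b i)) =
      if ∀ i, q i = 0 → ρ *ᵥ b i = 0 then
        ((-vN ρ - ∑ i, diagEntries b ρ i * Real.log (q i) : ℝ) : EReal)
      else ⊤ := by
  have hsupp := hb.ker_sum_smul_proj_le_ker_iff (fun i => (q i : ℂ)) ρ
  simp only [Complex.ofReal_eq_zero] at hsupp
  rw [relEnt, hsupp, hb.mlog_sum_smul_proj, mul_sub, trace_sub, Complex.sub_re,
    re_trace_mul_sum_smul_proj, vN]
  simp only [mul_comm, neg_neg]

end ONB

end OrthonormalBasis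

lemma sum_mul_log_le_sum_mul_log {ι : Type*} (s : Finset ι) {p q : ι → ℝ}
    (hp : ∀ i ∈ s, 0 ≤ p i) (hq : ∀ i ∈ s, 0 ≤ q i) (hpq : ∀ i ∈ s, q i = 0 → p i = 0)
    (hsum : ∑ i ∈ s, q i ≤ ∑ i ∈ s, p i) :
    ∑ i ∈ s, p i * Real.log (q i) ≤ ∑ i ∈ s, p i * Real.log (p i) := by
  suffices h : ∀ i ∈ s, p i * Real.log (q i) - p i * Real.log (p i) ≤ q i - p i by
    have := Finset.sum_le_sum h
    rw [Finset.sum_sub_distrib, Finset.sum_sub_distrib] at this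
    linarith
  intro i hi
  rcases (hp i hi).eq_or_lt with hp0 | hp0
  · simp [← hp0, hq i hi]
  have hq0 : 0 < q i := (hq i hi).lt_of_ne fun h => hp0.ne' (hpq i hi h.symm)
  -- `log x ≤ x - 1` at `x = q / p`
  have := Real.log_le_sub_one_of_pos (div_pos hq0 hp0)
  rw [Real.log_div hq0.ne' hp0.ne', le_sub_iff_add_le, le_div_iff₀ hp0] at this
  nlinarith

/-- the relative entropy of coherence equals the minimum relative entropy
to the set of incoherent (diagonal) states, and equals `S(Λ^Ξ(ρ)) − S(ρ)`. -/
theorem relEnt_coherence_eq_entropy_difference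
    (ρ : Matrix n n ℂ) (hρ : IsDensity ρ) (b : n → n → ℂ) (hb : ONB b) :
    IsLeast {x : EReal | ∃ σ : Matrix n n ℂ, IsDensity σ ∧ dephase b σ = σ ∧ x = relEnt ρ σ}
      ((vN (dephase b ρ) - vN ρ : ℝ) : EReal) := by
  obtain ⟨hρ, hρ_tr⟩ := hρ
  have hΔ := hρ.isHermitian.dephase_eq b
  set p := diagEntries b ρ
  have hp_supp : ∀ i, p i = 0 → ρ *ᵥ b i = 0 := fun i => hρ.mulVec_eq_zero_of_diagEntries_eq_zero
  have hp_sum : ∑ i, p i = 1 := by rw [hb.sum_diagEntries, hρ_tr, Complex.one_re]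
  have hvN : vN (dephase b ρ) = -∑ i, p i * Real.log (p i) := by rw [hΔ, hb.vN_sum_smul_proj]
  refine ⟨⟨dephase b ρ, ⟨?_, by rw [hb.trace_dephase, hρ_tr]⟩, ?_, ?_⟩, ?_⟩
  · rw [hΔ]; exact posSemidef_sum_smul_proj b (hρ.diagEntries_nonneg b)
  · rw [hΔ, hb.dephase_sum_smul_proj]
  · rw [hΔ, hb.relEnt_sum_smul_proj, if_pos hp_supp, ← hΔ, hvN]; congr 1; ring
  · rintro _ ⟨σ, ⟨hσ, hσ_tr⟩, hσ_fix, rfl⟩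
    have hσ_eq := hσ_fix ▸ hσ.isHermitian.dephase_eq b
    rw [hσ_eq, hb.relEnt_sum_smul_proj]
    split_ifs with hq
    · have hq_sum : ∑ i, diagEntries b σ i = 1 := by
        rw [hb.sum_diagEntries, hσ_tr, Complex.one_re]
      have gibbs := sum_mul_log_le_sum_mul_log univ (fun i _ => hρ.diagEntries_nonneg b i)
        (fun i _ => hσ.diagEntries_nonneg b i)
        (fun i _ h => diagEntries_eq_zero_of_mulVec_eq_zero (hq i h)) (by rw [hp_sum, hq_sum])
      rw [hvN, EReal.coe_le_coe_iff]
      linarith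
    · exact le_top

end
end

section
/- For a maximally correlated state ρ = Σ_{ij} ρ_{ij} |ii⟩⟨jj| on H_A ⊗ H_B (with d_A = d_B = d), the B-side measurement-induced disturbance in relative entropy equals S(ρ_B) − S(ρ), i.e. S(ρ ‖ (I ⊗ Λ^{E_B})(ρ)) = S(ρ_B) − S(ρ), where E_B = {|j⟩} is the computational eigenbasis of ρ_B. -/
open Matrix Kronecker BigOperators Finset
open scoped Classical ComplexOrder

noncomputable section

variable {m n q : Type*} [Fintype m] [DecidableEq m] [Fintype n] [DecidableEq n]
  [Fintype q] [DecidableEq q]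

/-! Dephasing the `B` factor in the computational basis keeps exactly the entries
`ρ (i, j) (k, l)` with `j = l`; for a maximally correlated state only the diagonal ones survive,
so `(I ⊗ Λ^{E_B})(ρ) = Δ(ρ)`, the complete dephasing of `ρ`. For every state
`S(ρ ‖ Δ(ρ)) = S(Δ(ρ)) − S(ρ)`, because `log Δ(ρ)` is diagonal and so
`Tr ρ log Δ(ρ) = Tr Δ(ρ) log Δ(ρ)`. Finally the diagonal of `ρ` is carried by the pairs `(j, j)`
with weights `ρ_{jj}`, which are also the eigenvalues of `ρ_B`, so `S(Δ(ρ)) = S(ρ_B)`. -/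

lemma cfc_diagonal_ofReal {𝕜 : Type*} [RCLike 𝕜] (f : n → ℝ) (g : ℝ → ℝ) :
    cfc g (diagonal fun i => (f i : 𝕜)) = diagonal fun i => (g (f i) : 𝕜) := by
  have hA : (diagonal fun i => (f i : 𝕜)).IsHermitian := by
    simp [IsHermitian, diagonal_conjTranspose, Pi.star_def]
  set U : Matrix n n 𝕜 := (hA.eigenvectorUnitary : Matrix n n 𝕜)
  have hUU : U * star U = 1 := Matrix.mem_unitaryGroup_iff.mp hA.eigenvectorUnitary.2
  have hAU : (diagonal fun i => (f i : 𝕜)) * U = U * diagonal fun a => (hA.eigenvalues a : 𝕜) := by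
    conv_lhs => rw [hA.spectral_theorem]
    simp only [Unitary.conjStarAlgAut_apply]
    rw [Matrix.mul_assoc, Matrix.mem_unitaryGroup_iff'.mp hA.eigenvectorUnitary.2, Matrix.mul_one]
    rfl
  have hsupp : ∀ x a, U x a ≠ 0 → hA.eigenvalues a = f x := fun x a hxa => by
    have := congrFun₂ hAU x a
    rw [diagonal_mul, mul_diagonal, mul_comm] at this
    exact_mod_cast (mul_left_cancel₀ hxa this).symm
  have hgU : (diagonal fun i => (g (f i) : 𝕜)) * U
      = U * diagonal fun a => (g (hA.eigenvalues a) : 𝕜) := by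
    ext x a
    rw [diagonal_mul, mul_diagonal]
    by_cases hxa : U x a = 0
    · simp [hxa]
    · rw [hsupp x a hxa, mul_comm]
  rw [hA.cfc_eq, IsHermitian.cfc, Unitary.conjStarAlgAut_apply]
  change U * _ * star U = _
  rw [Function.comp_def, Function.comp_def, ← hgU, Matrix.mul_assoc, hUU, Matrix.mul_one]

lemma mlog_eq_cfc {A : Matrix n n ℂ} (hA : A.IsHermitian) : mlog A = cfc Real.log A := by
  rw [mlog, dif_pos hA, hA.cfc_eq, IsHermitian.cfc, Unitary.conjStarAlgAut_apply]
  rfl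

lemma mlog_diagonal (f : n → ℝ) :
    mlog (diagonal fun i => (f i : ℂ)) = diagonal fun i => (Real.log (f i) : ℂ) := by
  rw [mlog_eq_cfc (by simp [IsHermitian, diagonal_conjTranspose, Pi.star_def])]
  exact cfc_diagonal_ofReal (𝕜 := ℂ) f Real.log

lemma vN_diagonal (f : n → ℝ) : vN (diagonal fun i => (f i : ℂ)) = ∑ i, Real.negMulLog (f i) := by
  simp [vN, mlog_diagonal, trace_diagonal, Real.negMulLog]

lemma Matrix.PosSemidef.mulVec_eq_zero_of_diagonal_diag {A : Matrix n n ℂ} (hA : A.PosSemidef)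
    {v : n → ℂ} (hv : diagonal A.diag *ᵥ v = 0) : A *ᵥ v = 0 := by
  have hcol : ∀ k, A k k = 0 → ∀ i, A i k = 0 := fun k hk i => by
    have := (hA.dotProduct_mulVec_zero_iff (Pi.single k 1)).mp (by simp [hk])
    simpa using congrFun this i
  ext i
  refine Finset.sum_eq_zero fun k _ => ?_
  have hkv : A k k * v k = 0 := by simpa [mulVec_diagonal] using congrFun hv k
  rcases mul_eq_zero.mp hkv with hk | hk
  · simp [hcol k hk i]
  · simp [hk]

lemma trace_mul_diagonal {α : Type*} [Semiring α] (A : Matrix n n α) (g : n → α) :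
    (A * diagonal g).trace = (diagonal A.diag * diagonal g).trace := by
  simp [trace, mul_diagonal]

lemma Matrix.IsHermitian.diagonal_diag_eq {ι : Type*} [DecidableEq ι] {A : Matrix ι ι ℂ}
    (hA : A.IsHermitian) :
    diagonal A.diag = diagonal fun i => ((A i i).re : ℂ) := by
  rw [← hA.coe_re_diag]; rfl

lemma relEnt_diagonal_diag {ρ : Matrix n n ℂ} (hρ : ρ.PosSemidef) :
    relEnt ρ (diagonal ρ.diag) = ((vN (diagonal ρ.diag) - vN ρ : ℝ) : EReal) := by
  rw [relEnt, if_pos fun v => hρ.mulVec_eq_zero_of_diagonal_diag, EReal.coe_eq_coe_iff, vN, vN,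
    Matrix.mul_sub, trace_sub, Complex.sub_re, hρ.isHermitian.diagonal_diag_eq, mlog_diagonal,
    trace_mul_diagonal, ← hρ.isHermitian.diagonal_diag_eq]
  ring

lemma kron_proj_stdB {ι κ : Type*} [DecidableEq ι] [DecidableEq κ] (k : κ) :
    (1 : Matrix ι ι ℂ) ⊗ₖ proj (stdB k) = diagonal fun x : ι × κ => if x.2 = k then 1 else 0 := by
  ext ⟨a, b⟩ ⟨c, e⟩
  simp only [kroneckerMap_apply, proj, stdB, vecMulVec_apply, Pi.star_apply, Matrix.one_apply,
    diagonal_apply, Prod.mk.injEq]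
  split_ifs <;> simp_all

lemma dephaseB_stdB_apply (ρ : Matrix (m × n) (m × n) ℂ) (x y : m × n) :
    dephaseB stdB ρ x y = if x.2 = y.2 then ρ x y else 0 := by
  simp [dephaseB, Matrix.sum_apply, kron_proj_stdB, mul_diagonal, diagonal_mul]

def IsMaxCorrelated {ι : Type*} [DecidableEq ι] (ρ : Matrix (ι × ι) (ι × ι) ℂ) : Prop :=
  ∀ i j k l, ρ (i, j) (k, l) = if i = j ∧ k = l then ρ (i, i) (k, k) else 0

namespace IsMaxCorrelated

lemma diag_apply {ι : Type*} [DecidableEq ι] {ρ : Matrix (ι × ι) (ι × ι) ℂ}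
    (hρ : IsMaxCorrelated ρ) (i j : ι) :
    ρ.diag (i, j) = if i = j then ρ (j, j) (j, j) else 0 := by
  rw [Matrix.diag_apply, hρ]
  split_ifs <;> simp_all

lemma dephaseB_stdB {ρ : Matrix (n × n) (n × n) ℂ} (hρ : IsMaxCorrelated ρ) :
    dephaseB stdB ρ = diagonal ρ.diag := by
  ext ⟨i, j⟩ ⟨k, l⟩
  rw [dephaseB_stdB_apply, diagonal_apply, hρ, hρ.diag_apply]
  split_ifs <;> simp_all

lemma ptraceA_eq {ρ : Matrix (n × n) (n × n) ℂ} (hρ : IsMaxCorrelated ρ) :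
    ptraceA ρ = diagonal fun j => ρ (j, j) (j, j) := by
  ext j l
  simp only [ptraceA, of_apply, hρ _ j _ l, diagonal_apply]
  split_ifs with hjl
  · simp [hjl]
  · exact Finset.sum_eq_zero fun i _ => if_neg fun h => hjl (h.1.symm.trans h.2)

lemma vN_diagonal_diag_eq_vN_ptraceA {ρ : Matrix (n × n) (n × n) ℂ} (hρ : IsMaxCorrelated ρ)
    (hh : ρ.IsHermitian) : vN (diagonal ρ.diag) = vN (ptraceA ρ) := by
  have hre : ∀ x, ρ x x = ((ρ x x).re : ℂ) := fun x => (congrFun hh.coe_re_diag x).symm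
  rw [hρ.ptraceA_eq, hh.diagonal_diag_eq, funext fun j => hre (j, j), vN_diagonal, vN_diagonal,
    Fintype.sum_prod_type]
  refine Finset.sum_congr rfl fun i _ => ?_
  refine Finset.sum_eq_single i (fun j _ hji => ?_) (by simp)
  have hzero : ρ (i, j) (i, j) = 0 := by rw [hρ i j i j, if_neg fun h => hji h.1.symm]
  simp [hzero]

end IsMaxCorrelated

/-- for a maximally correlated state `ρ = Σ ρ_{ij}|ii⟩⟨jj|`, the
B-side relative-entropy MID equals `S(ρ_B) − S(ρ)`. -/
theorem mc_state_MID
    (d : ℕ) (ρ : Matrix (Fin d × Fin d) (Fin d × Fin d) ℂ) (hρ : IsDensity ρ)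
    (hmc : ∀ i j k l, ρ (i, j) (k, l) = if i = j ∧ k = l then ρ (i, i) (k, k) else 0) :
    relEnt ρ (dephaseB stdB ρ) = ((vN (ptraceA ρ) - vN ρ : ℝ) : EReal) := by
  replace hmc : IsMaxCorrelated ρ := hmc
  rw [hmc.dephaseB_stdB, relEnt_diagonal_diag hρ.1,
    hmc.vN_diagonal_diag_eq_vN_ptraceA hρ.1.isHermitian]

end
end
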